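/- arXiv:2403.07878 — 5 statements merged into one kernel-verified Lean document; each statement's English description precedes it below -/
import Mathlib

section
/- For all complex numbers x and non-negative integers n, the sum over k from 0 to n of binom(n,k) * (-1)^k * x^(k+1) * (1+x)^(n-k) / (k+1) equals ((1+x)^(n+1) - 1)/(n+1). -/
open Finset

/-- Lucas numbers on naturals. -/
def lucasNat : ℕ → ℤ
  | 0 => 2
  | 1 => 1
  | n + 2 => lucasNat (n + 1) + lucasNat n

/-- Fibonacci numbers extended to integer indices: `F_{-m} = (-1)^(m-1) F_m`. -/
def fibZ (n : ℤ) : ℤ :=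
  if 0 ≤ n then (Nat.fib n.toNat : ℤ) else (-1) ^ ((-n).toNat + 1) * (Nat.fib (-n).toNat : ℤ)

/-- Lucas numbers extended to integer indices: `L_{-m} = (-1)^m L_m`. -/
def lucasZ (n : ℤ) : ℤ :=
  if 0 ≤ n then lucasNat n.toNat else (-1) ^ (-n).toNat * lucasNat (-n).toNat


/- Since `(n choose k) / (k + 1) = (n + 1 choose k + 1) / (n + 1)`, the sum is `-1 / (n + 1)` times the
binomial expansion of `(-x + (1 + x)) ^ (n + 1) = 1` with its `k = 0` term `(1 + x) ^ (n + 1)` removed. -/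

theorem sum_range_choose_succ_mul_pow {R : Type*} [CommRing R] (a b : R) (n : ℕ) :
    ∑ k ∈ range (n + 1), ((n + 1).choose (k + 1) : R) * a ^ (k + 1) * b ^ (n - k) =
      (a + b) ^ (n + 1) - b ^ (n + 1) := by
  rw [add_pow, sum_range_succ' _ (n + 1), eq_sub_iff_add_eq]
  simp only [Nat.add_sub_add_right, pow_zero, Nat.sub_zero, Nat.choose_zero_right, Nat.cast_one,
    one_mul, mul_one]
  exact congrArg (· + _) (sum_congr rfl fun k _ => by ring)

theorem Nat.cast_choose_div_add_one {K : Type*} [Field K] [CharZero K] (n k : ℕ) :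
    (n.choose k : K) / (k + 1) = ((n + 1).choose (k + 1) : K) / (n + 1) := by
  rw [div_eq_div_iff (Nat.cast_add_one_ne_zero k) (Nat.cast_add_one_ne_zero n)]
  exact_mod_cast (mul_comm _ _).trans (Nat.add_one_mul_choose_eq n k)

theorem stmt_0 (x : ℂ) (n : ℕ) :
    ∑ k ∈ range (n + 1),
      (n.choose k : ℂ) * (-1) ^ k * x ^ (k + 1) * (1 + x) ^ (n - k) / (k + 1) =
    ((1 + x) ^ (n + 1) - 1) / (n + 1) := by
  have summand (k : ℕ) :
      (n.choose k : ℂ) * (-1) ^ k * x ^ (k + 1) * (1 + x) ^ (n - k) / (k + 1) =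
        -(((n + 1).choose (k + 1) : ℂ) * (-x) ^ (k + 1) * (1 + x) ^ (n - k)) / (n + 1) := by
    rw [mul_div_right_comm, mul_div_right_comm, mul_div_right_comm, Nat.cast_choose_div_add_one]
    ring
  simp only [summand, ← sum_div, sum_neg_distrib, sum_range_choose_succ_mul_pow]
  ring
end

section
/- For all complex numbers x and non-negative integers n, the sum over k from 0 to n of binom(n,k) * (-1)^k * x^(k+2) * (1+x)^(n-k) / (k+2) equals ((1+x)^(n+2) - (n+2)*x - 1)/((n+1)*(n+2)). -/
open Finset

/-!
With `a = -x` and `b = 1 + x`, so that `a + b = 1`, the identity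
`binom(n,k) / (k+2) = (k+1) binom(n+2,k+2) / ((n+1)(n+2))` turns the sum into the terms `j ≥ 2`
of `∑ⱼ (j - 1) binom(n+2,j) aʲ b^(n+2-j)`. By the binomial theorem and its derivative in `a`,
the full sum is `(n+2) a (a+b)^(n+1) - (a+b)^(n+2) = (n+2) a - 1`, and the terms `j = 0, 1`
contribute `-b^(n+2)` and `0`.
-/

theorem Nat.add_one_mul_add_two_mul_choose_eq (n k : ℕ) :
    (n + 1) * (n + 2) * n.choose k = (n + 2).choose (k + 2) * (k + 1) * (k + 2) := by
  have h₁ := Nat.add_one_mul_choose_eq n k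
  have h₂ := Nat.add_one_mul_choose_eq (n + 1) (k + 1)
  linear_combination (n + 2) * h₁ + (k + 1) * h₂

section BinomialSums

variable {R : Type*} [CommRing R]

theorem sum_range_cast_mul_choose_mul_pow (a b : R) (m : ℕ) :
    ∑ j ∈ range (m + 2), (j : R) * (m + 1).choose j * a ^ j * b ^ (m + 1 - j) =
      (m + 1) * a * (a + b) ^ m := by
  rw [sum_range_succ', add_pow, mul_sum]
  simp only [Nat.cast_zero, zero_mul, add_zero]
  refine sum_congr rfl fun i _ => ?_
  have h := congrArg (Nat.cast : ℕ → R) (Nat.add_one_mul_choose_eq m i)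
  rw [Nat.add_sub_add_right]
  push_cast at h ⊢
  linear_combination -(a ^ (i + 1) * b ^ (m - i)) * h

theorem sum_range_sub_one_mul_choose_mul_pow_of_add_eq_one {a b : R} (hab : a + b = 1)
    (m : ℕ) :
    ∑ j ∈ range (m + 2), ((j : R) - 1) * (m + 1).choose j * a ^ j * b ^ (m + 1 - j) =
      (m + 1) * a - 1 := by
  have hsum := sum_range_cast_mul_choose_mul_pow a b m
  rw [hab, one_pow, mul_one] at hsum
  calc _ = ∑ j ∈ range (m + 2), (j : R) * (m + 1).choose j * a ^ j * b ^ (m + 1 - j) -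
        ∑ j ∈ range (m + 2), a ^ j * b ^ (m + 1 - j) * (m + 1).choose j := by
        rw [← sum_sub_distrib]
        exact sum_congr rfl fun j _ => by ring
    _ = (m + 1) * a - 1 := by rw [hsum, ← add_pow, hab, one_pow]

theorem sum_range_add_one_mul_choose_add_two_mul_pow_of_add_eq_one {a b : R} (hab : a + b = 1)
    (n : ℕ) :
    ∑ k ∈ range (n + 1), ((k : R) + 1) * (n + 2).choose (k + 2) * a ^ (k + 2) * b ^ (n - k) =
      b ^ (n + 2) + (n + 2) * a - 1 := by
  have h := sum_range_sub_one_mul_choose_mul_pow_of_add_eq_one hab (n + 1)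
  rw [sum_range_succ', sum_range_succ'] at h
  simp only [Nat.add_sub_add_right, Nat.choose_zero_right, add_assoc, Nat.reduceAdd] at h
  push_cast at h
  have hshift : ∀ k : ℕ, (k : R) + 2 - 1 = k + 1 := fun k => by ring
  simp only [hshift] at h
  linear_combination h

end BinomialSums

theorem stmt_1 (x : ℂ) (n : ℕ) :
    ∑ k ∈ range (n + 1),
      (n.choose k : ℂ) * (-1) ^ k * x ^ (k + 2) * (1 + x) ^ (n - k) / (k + 2) =
    ((1 + x) ^ (n + 2) - (n + 2) * x - 1) / ((n + 1) * (n + 2)) := by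
  have hn : ((n : ℂ) + 1) * (n + 2) ≠ 0 := by
    exact_mod_cast (by positivity : (n + 1) * (n + 2) ≠ 0)
  have hterm : ∀ k ∈ range (n + 1),
      (n.choose k : ℂ) * (-1) ^ k * x ^ (k + 2) * (1 + x) ^ (n - k) / (k + 2) =
        ((k : ℂ) + 1) * (n + 2).choose (k + 2) * (-x) ^ (k + 2) * (1 + x) ^ (n - k) /
          ((n + 1) * (n + 2)) := by
    intro k _
    have hk : (k : ℂ) + 2 ≠ 0 := by exact_mod_cast k.add_one_ne_zero
    have hchoose : ((n : ℂ) + 1) * (n + 2) * n.choose k =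
        (n + 2).choose (k + 2) * (k + 1) * (k + 2) := by
      exact_mod_cast Nat.add_one_mul_add_two_mul_choose_eq n k
    rw [div_eq_div_iff hk hn, neg_pow x, pow_add (-1 : ℂ) k 2]
    linear_combination (-1) ^ k * x ^ (k + 2) * (1 + x) ^ (n - k) * hchoose
  rw [sum_congr rfl hterm, ← sum_div,
    sum_range_add_one_mul_choose_add_two_mul_pow_of_add_eq_one (by ring : -x + (1 + x) = 1)]
  ring
end

section
/- For all complex numbers x and non-negative integers n, the sum over k from 0 to n of binom(n,k) * (-1)^k * x^(k+2) * (1+x)^(n-k) / ((k+1)*(k+2)) equals ((n+1)*x*(1+x)^(n+1) - (1+x)^(n+1) + 1)/((n+1)*(n+2)). -/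
/-!
Since `C(n,k) / ((k+1)(k+2)) = C(n+2,k+2) / ((n+1)(n+2))`, the sum is `1 / ((n+1)(n+2))` times the
binomial expansion of `((-x) + (1+x))^(n+2) = 1` with its terms of index `0` and `1` removed.
-/

open Finset

theorem Nat.choose_mul_add_one_mul_add_two (n k : ℕ) :
    n.choose k * ((n + 1) * (n + 2)) = (n + 2).choose (k + 2) * ((k + 1) * (k + 2)) := by
  have h₁ := Nat.add_one_mul_choose_eq n k
  have h₂ := Nat.add_one_mul_choose_eq (n + 1) (k + 1)
  calc n.choose k * ((n + 1) * (n + 2)) = (n + 2) * ((n + 1) * n.choose k) := by ring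
    _ = (n + 2) * (n + 1).choose (k + 1) * (k + 1) := by rw [h₁, mul_assoc]
    _ = (n + 2).choose (k + 2) * ((k + 1) * (k + 2)) := by rw [h₂]; ring

theorem choose_div_add_one_mul_add_two {K : Type*} [Field K] [CharZero K] (n k : ℕ) :
    (n.choose k : K) / ((k + 1) * (k + 2)) =
      ((n + 2).choose (k + 2) : K) / ((n + 1) * (n + 2)) := by
  rw [div_eq_div_iff (by norm_cast) (by norm_cast)]
  exact_mod_cast Nat.choose_mul_add_one_mul_add_two n k

theorem sum_range_choose_add_two_mul_pow {R : Type*} [CommRing R] (a b : R) (m : ℕ) :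
    ∑ k ∈ range (m + 1), ((m + 2).choose (k + 2) : R) * a ^ (k + 2) * b ^ (m - k) =
      (a + b) ^ (m + 2) - b ^ (m + 2) - (m + 2) * a * b ^ (m + 1) := by
  have h := add_pow a b (m + 2)
  rw [sum_range_succ', sum_range_succ'] at h
  have hshift (k : ℕ) :
      a ^ (k + 1 + 1) * b ^ (m + 2 - (k + 1 + 1)) * ((m + 2).choose (k + 1 + 1) : R) =
        ((m + 2).choose (k + 2) : R) * a ^ (k + 2) * b ^ (m - k) := by
    rw [show m + 2 - (k + 1 + 1) = m - k by omega]
    ring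
  rw [sum_congr rfl fun k _ ↦ hshift k] at h
  simp only [zero_add, pow_one, Nat.add_one_sub_one, Nat.choose_one_right, Nat.cast_add,
    Nat.cast_ofNat, pow_zero, tsub_zero, one_mul, Nat.choose_zero_right, Nat.cast_one, mul_one] at h
  linear_combination -h

theorem stmt_2 (x : ℂ) (n : ℕ) :
    ∑ k ∈ range (n + 1),
      (n.choose k : ℂ) * (-1) ^ k * x ^ (k + 2) * (1 + x) ^ (n - k) / ((k + 1) * (k + 2)) =
    ((n + 1) * x * (1 + x) ^ (n + 1) - (1 + x) ^ (n + 1) + 1) / ((n + 1) * (n + 2)) := by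
  have hterm (k : ℕ) :
      (n.choose k : ℂ) * (-1) ^ k * x ^ (k + 2) * (1 + x) ^ (n - k) / ((k + 1) * (k + 2)) =
        ((n + 2).choose (k + 2) : ℂ) * (-x) ^ (k + 2) * (1 + x) ^ (n - k) /
          ((n + 1) * (n + 2)) := by
    calc _ = (n.choose k : ℂ) / ((k + 1) * (k + 2)) * ((-x) ^ (k + 2) * (1 + x) ^ (n - k)) := by
          ring
      _ = _ := by rw [choose_div_add_one_mul_add_two]; ring
  rw [sum_congr rfl fun k _ ↦ hterm k, ← sum_div, sum_range_choose_add_two_mul_pow,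
    neg_add_cancel_comm_assoc, one_pow]
  ring
end

section
/- For all complex numbers x and non-negative integers n, the sum over k from 0 to n of binom(n,k) * (-1)^k * x^k * (1+x)^(n-k) / (k+2) equals the sum over k from 0 to n of binom(n,k) * x^k / ((k+1)*(k+2)). -/
open Finset

/-! Both sides equal `∫₀¹ t (1 + x (1 - t))ⁿ dt`. Expanding `(-x t + (1 + x))ⁿ` by the
binomial theorem and integrating termwise with `∫₀¹ t^(k+1) dt = 1/(k+2)` gives the left
side; after the substitution `t ↦ 1 - t`, expanding `(1 + x t)ⁿ` and using
`∫₀¹ (1 - t) t^k dt = 1/((k+1)(k+2))` gives the right side. -/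

open intervalIntegral in
theorem integral_finsetSum_const_mul {ι : Type*} {a b : ℝ} (s : Finset ι) (c : ι → ℂ)
    {f : ι → ℝ → ℂ} (hf : ∀ i, Continuous (f i)) :
    ∫ t in a..b, ∑ i ∈ s, c i * f i t = ∑ i ∈ s, c i * ∫ t in a..b, f i t := by
  rw [integral_finsetSum fun i _ => ((hf i).const_mul (c i)).intervalIntegrable a b]
  simp only [integral_const_mul]

theorem integral_ofReal_pow (k : ℕ) : ∫ t in (0 : ℝ)..1, (t : ℂ) ^ k = 1 / (k + 1) := by
  simp only [← Complex.ofReal_pow, intervalIntegral.integral_ofReal, integral_pow]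
  push_cast
  simp

theorem integral_one_sub_mul_ofReal_pow (k : ℕ) :
    ∫ t in (0 : ℝ)..1, (1 - t : ℂ) * t ^ k = 1 / ((k + 1) * (k + 2)) := by
  have hcont : ∀ m : ℕ, Continuous fun t : ℝ => (t : ℂ) ^ m := fun m => by fun_prop
  simp only [sub_mul, one_mul, ← pow_succ']
  rw [intervalIntegral.integral_sub ((hcont k).intervalIntegrable 0 1)
    ((hcont (k + 1)).intervalIntegrable 0 1), integral_ofReal_pow, integral_ofReal_pow]
  have h1 : (k + 1 : ℂ) ≠ 0 := by exact_mod_cast k.succ_ne_zero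
  have h2 : (k + 2 : ℂ) ≠ 0 := by exact_mod_cast (k + 1).succ_ne_zero
  push_cast
  rw [show (k : ℂ) + 1 + 1 = k + 2 by ring]
  field_simp
  ring

theorem sum_choose_mul_neg_pow_div_eq_integral (x : ℂ) (n : ℕ) :
    ∑ k ∈ range (n + 1), (n.choose k : ℂ) * (-1) ^ k * x ^ k * (1 + x) ^ (n - k) / (k + 2) =
      ∫ t in (0 : ℝ)..1, (t : ℂ) * (1 + x * (1 - t)) ^ n := by
  have hpow : ∀ t : ℝ, (t : ℂ) * (1 + x * (1 - t)) ^ n =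
      ∑ k ∈ range (n + 1),
        (n.choose k * (-1) ^ k * x ^ k * (1 + x) ^ (n - k)) * (t : ℂ) ^ (k + 1) := by
    intro t
    rw [show 1 + x * (1 - t) = -x * t + (1 + x) by ring, add_pow, mul_sum]
    refine sum_congr rfl fun k _ => ?_
    ring
  simp_rw [hpow]
  rw [integral_finsetSum_const_mul _ _ fun k => by fun_prop]
  refine sum_congr rfl fun k _ => ?_
  rw [integral_ofReal_pow]
  push_cast
  ring

theorem sum_choose_mul_pow_div_eq_integral (x : ℂ) (n : ℕ) :
    ∑ k ∈ range (n + 1), (n.choose k : ℂ) * x ^ k / ((k + 1) * (k + 2)) =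
      ∫ t in (0 : ℝ)..1, (1 - t : ℂ) * (1 + x * t) ^ n := by
  have hpow : ∀ t : ℝ, (1 - t : ℂ) * (1 + x * t) ^ n =
      ∑ k ∈ range (n + 1), (n.choose k * x ^ k) * ((1 - t : ℂ) * t ^ k) := by
    intro t
    rw [add_comm, add_pow, mul_sum]
    refine sum_congr rfl fun k _ => ?_
    ring
  simp_rw [hpow]
  rw [integral_finsetSum_const_mul _ _ fun k => by fun_prop]
  simp only [integral_one_sub_mul_ofReal_pow, mul_one_div]

theorem stmt_3 (x : ℂ) (n : ℕ) :
    ∑ k ∈ range (n + 1),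
      (n.choose k : ℂ) * (-1) ^ k * x ^ k * (1 + x) ^ (n - k) / (k + 2) =
    ∑ k ∈ range (n + 1), (n.choose k : ℂ) * x ^ k / ((k + 1) * (k + 2)) := by
  rw [sum_choose_mul_neg_pow_div_eq_integral, sum_choose_mul_pow_div_eq_integral]
  simpa using intervalIntegral.integral_comp_sub_left
    (fun t : ℝ => (1 - t : ℂ) * (1 + x * t) ^ n) 1 (a := 0) (b := 1)
end

section
/- For any integers r, s, t and non-negative integer n: sum_{k=0}^n binom(n,k) * (-1)^(s(k+1)+1+t) * F_r^(k+1) * F_s^(n-k) * L_{rn - s(k+1) - rk - t} / (k+1) = ((-1)^t * F_s^(n+1) * L_{r(n+1)-t} - L_t * F_{r+s}^(n+1)) / (n+1). -/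
open Finset

/-!
Binet's formulas `F_m = (φ^m - ψ^m)/√5` and `L_m = φ^m + ψ^m` hold for all integer `m`. Since
`φψ = -1` we have `(-1)^s φ^(-s) = ψ^s`, so by the binomial theorem
`∑_j C(N,j) (-1)^(sj) F_r^j F_s^(N-j) φ^(rN-(r+s)j-t) = φ^(-t) (F_r ψ^s + F_s φ^r)^N`,
and `F_r ψ^s + F_s φ^r = F_(r+s)`; adding the conjugate sum gives `L_(-t) F_(r+s)^N`.
The factor `1/(k+1)` is absorbed by `(n+1) C(n,k) = (k+1) C(n+1,k+1)`, which turns the left-hand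
side into the full binomial sum with `N = n + 1` minus its `j = 0` term.
-/

open Real goldenRatio

theorem fibZ_eq_intFib (m : ℤ) : fibZ m = Int.fib m := by
  obtain ⟨n, rfl | rfl⟩ := m.eq_nat_or_neg
  · simp [fibZ]
  · rw [Int.fib_neg_natCast, fibZ]
    split_ifs with h
    · obtain rfl : n = 0 := by omega
      simp
    · simp

theorem fibZ_eq_binet (m : ℤ) : (fibZ m : ℝ) = (φ ^ m - ψ ^ m) / √5 := by
  rw [fibZ_eq_intFib, coe_intFib_eq]

theorem lucasNat_eq_binet : ∀ n : ℕ, (lucasNat n : ℝ) = φ ^ n + ψ ^ n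
  | 0 => by norm_num [lucasNat]
  | 1 => by simp [lucasNat, goldenRatio_add_goldenConj]
  | n + 2 => by
    rw [lucasNat, Int.cast_add, lucasNat_eq_binet (n + 1), lucasNat_eq_binet n]
    linear_combination -(φ ^ n * goldenRatio_sq) - ψ ^ n * goldenConj_sq

theorem lucasZ_neg_natCast (n : ℕ) : lucasZ (-n) = (-1) ^ n * lucasNat n := by
  rw [lucasZ]
  split_ifs with h
  · obtain rfl : n = 0 := by omega
    simp
  · simp

theorem goldenRatio_zpow_neg (t : ℤ) : φ ^ (-t) = (-1) ^ t * ψ ^ t := by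
  rw [zpow_neg, ← inv_zpow, inv_goldenRatio, neg_eq_neg_one_mul, mul_zpow]

theorem goldenConj_zpow_neg (t : ℤ) : ψ ^ (-t) = (-1) ^ t * φ ^ t := by
  rw [zpow_neg, ← inv_zpow, inv_goldenConj, neg_eq_neg_one_mul, mul_zpow]

theorem lucasZ_eq_binet (m : ℤ) : (lucasZ m : ℝ) = φ ^ m + ψ ^ m := by
  obtain ⟨n, rfl | rfl⟩ := m.eq_nat_or_neg
  · simp [lucasZ, lucasNat_eq_binet]
  · rw [lucasZ_neg_natCast, goldenRatio_zpow_neg, goldenConj_zpow_neg]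
    push_cast
    rw [lucasNat_eq_binet, zpow_natCast, zpow_natCast, zpow_natCast]
    ring

theorem lucasZ_neg (t : ℤ) : (lucasZ (-t) : ℝ) = (-1) ^ t * lucasZ t := by
  rw [lucasZ_eq_binet, lucasZ_eq_binet, goldenRatio_zpow_neg, goldenConj_zpow_neg]
  ring

theorem fibZ_add (r s : ℤ) : (fibZ (r + s) : ℝ) = fibZ r * ψ ^ s + fibZ s * φ ^ r := by
  simp only [fibZ_eq_binet, zpow_add₀ goldenRatio_ne_zero, zpow_add₀ goldenConj_ne_zero]
  ring

theorem sum_choose_mul_zpow_eq {K : Type*} [Field K] {α β : K} (h : α * β = -1) (a b : K)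
    (r s t : ℤ) (N : ℕ) :
    ∑ j ∈ range (N + 1), (N.choose j : K) * (-1) ^ (s * j) * a ^ j * b ^ (N - j) *
      α ^ (r * N - (r + s) * j - t) = α ^ (-t) * (a * β ^ s + b * α ^ r) ^ N := by
  have hα : α ≠ 0 := left_ne_zero_of_mul (h ▸ neg_ne_zero.2 one_ne_zero)
  have hβ : β = -1 * α⁻¹ := by field_simp; linear_combination h
  rw [add_pow, mul_sum]
  refine sum_congr rfl fun j hj => ?_
  have hjN : j ≤ N := Nat.lt_succ_iff.1 (mem_range.1 hj)
  have hexp : r * N - (r + s) * j - t = -t + r * ((N - j : ℕ) : ℤ) + -s * j := by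
    push_cast [Nat.cast_sub hjN]; ring
  rw [hexp, zpow_add₀ hα, zpow_add₀ hα, hβ]
  simp only [zpow_mul, zpow_natCast, zpow_neg, mul_zpow, inv_zpow]
  ring

theorem sum_choose_fibZ_lucasZ (r s t : ℤ) (N : ℕ) :
    ∑ j ∈ range (N + 1), (N.choose j : ℝ) * (-1) ^ (s * j) * (fibZ r : ℝ) ^ j *
      (fibZ s : ℝ) ^ (N - j) * (lucasZ (r * N - (r + s) * j - t) : ℝ) =
      lucasZ (-t) * fibZ (r + s) ^ N := by
  have hψ : (fibZ r : ℝ) * φ ^ s + fibZ s * ψ ^ r = fibZ (r + s) := by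
    rw [add_comm r s, fibZ_add]; ring
  simp only [lucasZ_eq_binet, mul_add, sum_add_distrib,
    sum_choose_mul_zpow_eq goldenRatio_mul_goldenConj,
    sum_choose_mul_zpow_eq goldenConj_mul_goldenRatio, ← fibZ_add, hψ]
  ring

theorem sum_choose_neg_one_zpow_fibZ_lucasZ (r s t : ℤ) (N : ℕ) :
    ∑ j ∈ range (N + 1), (N.choose j : ℝ) * (-1) ^ (s * j + 1 + t) * (fibZ r : ℝ) ^ j *
      (fibZ s : ℝ) ^ (N - j) * (lucasZ (r * N - (r + s) * j - t) : ℝ) =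
      -(lucasZ t * fibZ (r + s) ^ N) := by
  have hsign (j : ℕ) : (-1 : ℝ) ^ (s * j + 1 + t) = -(-1) ^ t * (-1) ^ (s * j) := by
    rw [add_right_comm, zpow_add_one₀ (by norm_num), zpow_add₀ (by norm_num)]
    ring
  have hsq : (-1 : ℝ) ^ t * (-1) ^ t = 1 := by rw [← mul_zpow]; norm_num
  calc _ = -(-1) ^ t * ∑ j ∈ range (N + 1), (N.choose j : ℝ) * (-1) ^ (s * j) *
        (fibZ r : ℝ) ^ j * (fibZ s : ℝ) ^ (N - j) *
          (lucasZ (r * N - (r + s) * j - t) : ℝ) := by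
        rw [mul_sum]
        exact sum_congr rfl fun j _ => by rw [hsign]; ring
    _ = _ := by
        rw [sum_choose_fibZ_lucasZ, lucasZ_neg]
        linear_combination -(lucasZ t * fibZ (r + s) ^ N : ℝ) * hsq

theorem sum_range_choose_mul_div_add_one {K : Type*} [Field K] [CharZero K] (f : ℕ → K)
    (n : ℕ) :
    ∑ k ∈ range (n + 1), (n.choose k : K) * f (k + 1) / (k + 1) =
      (∑ j ∈ range (n + 2), ((n + 1).choose j : K) * f j - f 0) / (n + 1) := by
  rw [sum_range_succ' (fun j => ((n + 1).choose j : K) * f j) (n + 1), Nat.choose_zero_right,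
    Nat.cast_one, one_mul, add_sub_cancel_right, sum_div]
  refine sum_congr rfl fun k _ => ?_
  rw [div_eq_div_iff (Nat.cast_add_one_ne_zero _) (Nat.cast_add_one_ne_zero _)]
  have h := congrArg (Nat.cast : ℕ → K) (Nat.add_one_mul_choose_eq n k)
  push_cast at h
  linear_combination f (k + 1) * h

theorem stmt_7 (r s t : ℤ) (n : ℕ) :
    ∑ k ∈ range (n + 1),
      (n.choose k : ℚ) * (-1) ^ (s * (k + 1) + 1 + t) * (fibZ r : ℚ) ^ (k + 1) *
        (fibZ s : ℚ) ^ (n - k) * (lucasZ (r * n - s * (k + 1) - r * k - t) : ℚ) / (k + 1) =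
    ((-1) ^ t * (fibZ s : ℚ) ^ (n + 1) * (lucasZ (r * (n + 1) - t) : ℚ) -
      (lucasZ t : ℚ) * (fibZ (r + s) : ℚ) ^ (n + 1)) / (n + 1) := by
  rw [← (Rat.cast_injective (α := ℝ)).eq_iff]
  push_cast
  let F (j : ℕ) : ℝ := (-1) ^ (s * j + 1 + t) * (fibZ r : ℝ) ^ j *
    (fibZ s : ℝ) ^ (n + 1 - j) * lucasZ (r * (n + 1 : ℕ) - (r + s) * j - t)
  have hsum : ∑ j ∈ range (n + 2), ((n + 1).choose j : ℝ) * F j =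
      -(lucasZ t * fibZ (r + s) ^ (n + 1)) := by
    simp only [F, ← mul_assoc]
    exact sum_choose_neg_one_zpow_fibZ_lucasZ r s t (n + 1)
  calc _ = ∑ k ∈ range (n + 1), (n.choose k : ℝ) * F (k + 1) / (k + 1) :=
        sum_congr rfl fun k _ => by
          simp only [F, Nat.add_sub_add_right]
          push_cast
          ring_nf
    _ = (∑ j ∈ range (n + 2), ((n + 1).choose j : ℝ) * F j - F 0) / (n + 1) :=
        sum_range_choose_mul_div_add_one F n
    _ = _ := by
        rw [hsum]
        simp only [F, CharP.cast_eq_zero, mul_zero, zpow_add₀ (show (-1 : ℝ) ≠ 0 by norm_num),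
          zpow_one, pow_zero, Nat.sub_zero, sub_zero]
        push_cast
        ring
end
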